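/- For the one-dimensional Cucker–Smale system with communication rate ψ(r) = (1 + r²)^{−β} and β ≤ 1/2, unconditional flocking holds: for every initial datum, sup_t max_{i,j}|x_i(t) − x_j(t)| < ∞ and max_{i,j}|v_i(t) − v_j(t)| → 0 exponentially as t → ∞. -/

import Mathlib

/-!
Measure the spread of the flock by `X = ∑ᵢⱼ (xᵢ - xⱼ)²` and `V = ∑ᵢⱼ (vᵢ - vⱼ)²`. Since every
pairwise weight is at least `ψ(√X) = (1 + X)^(-β)`, the symmetry of the interaction gives
`V' ≤ -2 (1 + X)^(-β) V`, while Cauchy–Schwarz gives `X' ≤ 2 √X √V`. For `β ≤ 1/2` we have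
`√X / (1 + X) ≤ (1 + X)^(-β)`, and these two inequalities make `√V + log (1 + X) / 2`
nonincreasing (this is where `∫ ψ = ∞` enters). Hence `X` stays below a constant `X∞`, the
weights stay above `δ = (1 + X∞)^(-β) > 0`, and Grönwall's inequality `V' ≤ -2δV` yields the
exponential decay of the velocity differences.
-/

open Real Set Finset

section SumSqDiff

variable {ι : Type*} [Fintype ι]

def sumSqDiff (u : ι → ℝ) : ℝ := ∑ i, ∑ j, (u i - u j) ^ 2

lemma sumSqDiff_nonneg (u : ι → ℝ) : 0 ≤ sumSqDiff u :=
  sum_nonneg fun _ _ => sum_nonneg fun _ _ => sq_nonneg _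

lemma sq_sub_le_sumSqDiff (u : ι → ℝ) (i j : ι) : (u i - u j) ^ 2 ≤ sumSqDiff u :=
  calc (u i - u j) ^ 2 ≤ ∑ j', (u i - u j') ^ 2 :=
        single_le_sum (f := fun j' => (u i - u j') ^ 2) (fun _ _ => sq_nonneg _) (mem_univ j)
    _ ≤ sumSqDiff u :=
        single_le_sum (f := fun i' => ∑ j', (u i' - u j') ^ 2)
          (fun _ _ => sum_nonneg fun _ _ => sq_nonneg _) (mem_univ i)

lemma abs_sub_le_sqrt_sumSqDiff (u : ι → ℝ) (i j : ι) : |u i - u j| ≤ √(sumSqDiff u) := by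
  rw [← sqrt_sq_eq_abs]
  exact sqrt_le_sqrt (sq_sub_le_sumSqDiff u i j)

lemma sum_sum_sub_mul_sub_le (u w : ι → ℝ) :
    ∑ i, ∑ j, (u i - u j) * (w i - w j) ≤ √(sumSqDiff u) * √(sumSqDiff w) := by
  simpa only [sumSqDiff, Fintype.sum_prod_type] using
    sum_mul_le_sqrt_mul_sqrt univ (fun p : ι × ι => u p.1 - u p.2) (fun p => w p.1 - w p.2)

lemma HasDerivAt.sumSqDiff {f : ι → ℝ → ℝ} {f' : ι → ℝ} {t : ℝ}
    (hf : ∀ i, HasDerivAt (f i) (f' i) t) :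
    HasDerivAt (fun s => sumSqDiff (f · s)) (2 * ∑ i, ∑ j, (f i t - f j t) * (f' i - f' j)) t := by
  have h : HasDerivAt (fun s => ∑ i, ∑ j, (f i s - f j s) ^ 2)
      (∑ i, ∑ j, 2 * (f i t - f j t) ^ (2 - 1) * (f' i - f' j)) t :=
    HasDerivAt.fun_sum fun i _ => HasDerivAt.fun_sum fun j _ => ((hf i).sub (hf j)).fun_pow 2
  refine h.congr_deriv ?_
  simp only [mul_sum]
  exact sum_congr rfl fun i _ => sum_congr rfl fun j _ => by ring

lemma two_mul_sum_sum_eq_sum_sum_add_swap (F : ι → ι → ℝ) :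
    2 * ∑ i, ∑ j, F i j = ∑ i, ∑ j, (F i j + F j i) := by
  rw [two_mul]
  nth_rw 2 [sum_comm]
  simp only [sum_add_distrib]

lemma sum_sum_sub_mul_sub (u w : ι → ℝ) :
    ∑ i, ∑ j, (u i - u j) * (w i - w j)
      = 2 * (Fintype.card ι * ∑ i, u i * w i - (∑ i, u i) * ∑ i, w i) := by
  simp only [sub_mul, mul_sub, sum_sub_distrib, sum_const, card_univ, nsmul_eq_mul, ← mul_sum,
    ← sum_mul]
  ring

lemma sum_sum_sub_mul_sub_meanField (a : ι → ι → ℝ) (ha : ∀ i j, a i j = a j i) (u : ι → ℝ) :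
    ∑ i, ∑ j, (u i - u j) * ((Fintype.card ι : ℝ)⁻¹ * ∑ k, a i k * (u k - u i)
      - (Fintype.card ι : ℝ)⁻¹ * ∑ k, a j k * (u k - u j))
      = -∑ i, ∑ j, a i j * (u i - u j) ^ 2 := by
  have h_total : ∑ i, ∑ k, a i k * (u k - u i) = 0 := by
    have h := two_mul_sum_sum_eq_sum_sum_add_swap fun i k => a i k * (u k - u i)
    simp only [ha _ _, ← mul_add, sub_add_sub_cancel', sub_self, mul_zero, sum_const_zero] at h
    linarith
  have h_moment : 2 * ∑ i, u i * ∑ k, a i k * (u k - u i)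
      = -∑ i, ∑ k, a i k * (u i - u k) ^ 2 := by
    simp only [mul_sum univ _ (u _)]
    rw [two_mul_sum_sum_eq_sum_sum_add_swap]
    simp only [← sum_neg_distrib]
    exact sum_congr rfl fun i _ => sum_congr rfl fun k _ => by rw [ha k i]; ring
  rw [sum_sum_sub_mul_sub (w := fun i => (Fintype.card ι : ℝ)⁻¹ * ∑ k, a i k * (u k - u i)),
    ← mul_sum, h_total]
  simp only [mul_left_comm (u _), ← mul_sum, mul_zero, sub_zero]
  rcases isEmpty_or_nonempty ι with hι | hι
  · simp
  · have : (Fintype.card ι : ℝ) ≠ 0 := by positivity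
    field_simp
    linear_combination h_moment

lemma exists_hasDerivAt_sumSqDiff_le {f f' : ι → ℝ → ℝ} {t : ℝ}
    (hf : ∀ i, HasDerivAt (f i) (f' i t) t) :
    ∃ d, HasDerivAt (fun s => sumSqDiff (f · s)) d t
      ∧ d ≤ 2 * √(sumSqDiff (f · t)) * √(sumSqDiff (f' · t)) :=
  ⟨_, HasDerivAt.sumSqDiff hf, by
    linarith [sum_sum_sub_mul_sub_le (f · t) (f' · t)]⟩

end SumSqDiff

lemma sqrt_div_one_add_le_rpow_neg {X β : ℝ} (hX : 0 ≤ X) (hβ : β ≤ 1 / 2) :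
    √X / (1 + X) ≤ (1 + X) ^ (-β) :=
  calc √X / (1 + X) ≤ (1 + X) ^ (1 / 2 : ℝ) / (1 + X) := by
        rw [← sqrt_eq_rpow]
        gcongr
        linarith
    _ = (1 + X) ^ (-(1 / 2) : ℝ) := by
        rw [← rpow_sub_one (by linarith)]
        norm_num
    _ ≤ (1 + X) ^ (-β) := rpow_le_rpow_of_exponent_le (by linarith) (by linarith)

lemma exists_hasDerivWithinAt_sqrt_le {V : ℝ → ℝ} {V' c s : ℝ} (hV : HasDerivAt V V' s)
    (hV' : V' ≤ -2 * c * V s) (hnonneg : ∀ u ≥ s, 0 ≤ V u) (hanti : AntitoneOn V (Ici s)) :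
    ∃ d, HasDerivWithinAt (fun u => √(V u)) d (Ici s) s ∧ d ≤ -c * √(V s) := by
  rcases (hnonneg s le_rfl).eq_or_lt with hVs | hVs
  -- `√V` need not be differentiable where `V = 0`, but then `V` vanishes to the right.
  · have hzero : ∀ u ∈ Ici s, V u = 0 := fun u hu =>
      le_antisymm (hVs ▸ hanti self_mem_Ici hu hu) (hnonneg u hu)
    refine ⟨0, (hasDerivWithinAt_const s (Ici s) 0).congr
      (fun u hu => by rw [hzero u hu, sqrt_zero]) (by rw [← hVs, sqrt_zero]), ?_⟩
    rw [← hVs, sqrt_zero, mul_zero]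
  · refine ⟨1 / (2 * √(V s)) * V', ((hasDerivAt_sqrt hVs.ne').comp s hV).hasDerivWithinAt, ?_⟩
    have hsqrt : 0 < √(V s) := sqrt_pos.mpr hVs
    calc 1 / (2 * √(V s)) * V' ≤ 1 / (2 * √(V s)) * (-2 * c * V s) := by gcongr
      _ = -c * √(V s) := by
          field_simp
          rw [sq_sqrt hVs.le, mul_comm]

lemma sqrt_add_log_one_add_le {X V w : ℝ → ℝ}
    (hX : ∀ t ≥ 0, ∃ X', HasDerivAt X X' t ∧ X' ≤ 2 * √(X t) * √(V t))
    (hV : ∀ t ≥ 0, ∃ V', HasDerivAt V V' t ∧ V' ≤ -2 * w t * V t)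
    (hX0 : ∀ t ≥ 0, 0 ≤ X t) (hV0 : ∀ t ≥ 0, 0 ≤ V t)
    (hw : ∀ t ≥ 0, √(X t) / (1 + X t) ≤ w t) {t : ℝ} (ht : 0 ≤ t) :
    √(V t) + log (1 + X t) / 2 ≤ √(V 0) + log (1 + X 0) / 2 := by
  choose! X' hX' hX'le using hX
  choose! V' hV' hV'le using hV
  have hpos : ∀ s ≥ 0, 0 < 1 + X s := fun s hs => by linarith [hX0 s hs]
  have hw0 : ∀ s ≥ 0, 0 ≤ w s := fun s hs =>
    (div_nonneg (sqrt_nonneg _) (hpos s hs).le).trans (hw s hs)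
  have hanti : AntitoneOn V (Ici 0) := by
    refine antitoneOn_of_hasDerivWithinAt_nonpos (f' := V') (convex_Ici 0)
      (fun s hs => (hV' s hs).continuousAt.continuousWithinAt) (fun s hs => ?_) (fun s hs => ?_)
    · rw [interior_Ici] at hs
      exact (hV' s hs.le).hasDerivWithinAt
    · rw [interior_Ici] at hs
      nlinarith [hV'le s hs.le, hw0 s hs.le, hV0 s hs.le]
  have hderiv : ∀ s ≥ 0, ∃ d, HasDerivWithinAt (fun u => √(V u) + log (1 + X u) / 2) d (Ici s) s
      ∧ d ≤ 0 := by
    intro s hs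
    obtain ⟨d, hd, hdle⟩ := exists_hasDerivWithinAt_sqrt_le (hV' s hs) (hV'le s hs)
      (fun u hu => hV0 u (hs.trans hu)) (hanti.mono (Ici_subset_Ici.mpr hs))
    have hlog : HasDerivAt (fun u => log (1 + X u) / 2) (X' s / (1 + X s) / 2) s :=
      (((hX' s hs).const_add 1).log (hpos s hs).ne').div_const 2
    refine ⟨d + X' s / (1 + X s) / 2, hd.add hlog.hasDerivWithinAt, ?_⟩
    have : X' s / (1 + X s) / 2 ≤ w s * √(V s) :=
      calc X' s / (1 + X s) / 2 ≤ 2 * √(X s) * √(V s) / (1 + X s) / 2 := by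
            gcongr
            · exact (hpos s hs).le
            · exact hX'le s hs
        _ = √(X s) / (1 + X s) * √(V s) := by ring
        _ ≤ w s * √(V s) := by gcongr; exact hw s hs
    linarith
  choose! d hd hd0 using hderiv
  have hcont : ContinuousOn (fun u => √(V u) + log (1 + X u) / 2) (Icc 0 t) := fun s hs =>
    ((hV' s hs.1).continuousAt.sqrt.add ((((hX' s hs.1).continuousAt.const_add 1).log
      (hpos s hs.1).ne').div_const 2)).continuousWithinAt
  exact image_le_of_deriv_right_le_deriv_boundary hcont (fun s hs => hd s hs.1) le_rfl
    continuousOn_const (fun _ _ => hasDerivWithinAt_const _ _ _) (fun s hs => hd0 s hs.1)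
    ⟨ht, le_rfl⟩

lemma le_mul_exp_of_hasDerivAt_le {f : ℝ → ℝ} {k : ℝ}
    (hf : ∀ t ≥ 0, ∃ f', HasDerivAt f f' t ∧ f' ≤ -k * f t) {t : ℝ} (ht : 0 ≤ t) :
    f t ≤ f 0 * exp (-k * t) := by
  choose! f' hf' hle using hf
  simpa [gronwallBound_ε0] using le_gronwallBound_of_liminf_deriv_right_le (K := -k) (ε := 0)
    (fun s hs => (hf' s hs.1).continuousAt.continuousWithinAt)
    (fun s hs _ hr => (hf' s hs.1).hasDerivWithinAt.liminf_right_slope_le hr) le_rfl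
    (fun s hs => (hle s hs.1).trans_eq (add_zero _).symm) t ⟨ht, le_rfl⟩

lemma cuckerSmale_exists_hasDerivAt_sumSqDiff_velocity {N : ℕ} {β : ℝ} (hβ : 0 ≤ β)
    {x v : Fin N → ℝ → ℝ} {t : ℝ}
    (hv : ∀ i, HasDerivAt (v i)
      ((N : ℝ)⁻¹ * ∑ j, ((1 + |x i t - x j t| ^ 2) ^ (-β)) * (v j t - v i t)) t) :
    ∃ d, HasDerivAt (fun s => sumSqDiff (v · s)) d t
      ∧ d ≤ -2 * (1 + sumSqDiff (x · t)) ^ (-β) * sumSqDiff (v · t) := by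
  refine ⟨_, HasDerivAt.sumSqDiff hv, ?_⟩
  have hdiss := sum_sum_sub_mul_sub_meanField (fun i j => (1 + |x i t - x j t| ^ 2) ^ (-β))
    (fun i j => by rw [abs_sub_comm]) (v · t)
  rw [Fintype.card_fin] at hdiss
  have hweight : ∀ i j, (1 + sumSqDiff (x · t)) ^ (-β) ≤ (1 + |x i t - x j t| ^ 2) ^ (-β) :=
    fun i j => rpow_le_rpow_of_nonpos (by positivity)
      (by rw [sq_abs]; linarith [sq_sub_le_sumSqDiff (x · t) i j]) (neg_nonpos.mpr hβ)
  have : (1 + sumSqDiff (x · t)) ^ (-β) * sumSqDiff (v · t)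
      ≤ ∑ i, ∑ j, (1 + |x i t - x j t| ^ 2) ^ (-β) * (v i t - v j t) ^ 2 := by
    simp only [sumSqDiff, mul_sum]
    exact sum_le_sum fun i _ => sum_le_sum fun j _ =>
      mul_le_mul_of_nonneg_right (hweight i j) (sq_nonneg _)
  rw [hdiss]
  linarith

theorem stmt7_general (N : ℕ) (β : ℝ) (hβ0 : 0 < β) (hβ : β ≤ 1 / 2)
    (x v : Fin N → ℝ → ℝ)
    (hx : ∀ i t, HasDerivAt (x i) (v i t) t)
    (hv : ∀ i t, HasDerivAt (v i)
      ((N : ℝ)⁻¹ * ∑ j, ((1 + |x i t - x j t| ^ 2) ^ (-β)) * (v j t - v i t)) t) :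
    (∃ B : ℝ, ∀ t ≥ (0 : ℝ), ∀ i j, |x i t - x j t| ≤ B) ∧
    ∃ C δ : ℝ, 0 < δ ∧ ∀ t ≥ (0 : ℝ), ∀ i j, |v i t - v j t| ≤ C * Real.exp (-δ * t) := by
  have hV' := fun t => cuckerSmale_exists_hasDerivAt_sumSqDiff_velocity hβ0.le (hv · t)
  set L := √(sumSqDiff (v · 0)) + log (1 + sumSqDiff (x · 0)) / 2
  have hX_le : ∀ t ≥ 0, 1 + sumSqDiff (x · t) ≤ exp (2 * L) := by
    intro t ht
    have hlyap : √(sumSqDiff (v · t)) + log (1 + sumSqDiff (x · t)) / 2 ≤ L :=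
      sqrt_add_log_one_add_le (fun t _ => exists_hasDerivAt_sumSqDiff_le (hx · t))
        (fun t _ => hV' t) (fun t _ => sumSqDiff_nonneg _) (fun t _ => sumSqDiff_nonneg _)
        (fun t _ => sqrt_div_one_add_le_rpow_neg (sumSqDiff_nonneg _) hβ) ht
    rw [← log_le_iff_le_exp (by linarith [sumSqDiff_nonneg (x · t)])]
    linarith [sqrt_nonneg (sumSqDiff (v · t))]
  set δ := exp (2 * L) ^ (-β)
  have hV_le : ∀ t ≥ 0, sumSqDiff (v · t) ≤ sumSqDiff (v · 0) * exp (-(2 * δ) * t) := by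
    refine fun t ht =>
      le_mul_exp_of_hasDerivAt_le (f := fun s => sumSqDiff (v · s)) (fun s hs => ?_) ht
    obtain ⟨d, hd, hdle⟩ := hV' s
    have hδ : δ ≤ (1 + sumSqDiff (x · s)) ^ (-β) :=
      rpow_le_rpow_of_nonpos (by linarith [sumSqDiff_nonneg (x · s)]) (hX_le s hs) (by linarith)
    exact ⟨d, hd, by nlinarith [mul_le_mul_of_nonneg_right hδ (sumSqDiff_nonneg (v · s))]⟩
  refine ⟨⟨exp L, fun t ht i j => ?_⟩, √(sumSqDiff (v · 0)), δ, rpow_pos_of_pos (exp_pos _) _,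
    fun t ht i j => ?_⟩
  · calc |x i t - x j t| ≤ √(sumSqDiff (x · t)) := abs_sub_le_sqrt_sumSqDiff (x · t) i j
      _ ≤ √(exp (2 * L)) := sqrt_le_sqrt (by linarith [hX_le t ht])
      _ = exp L := by rw [← exp_half]; ring_nf
  · calc |v i t - v j t| ≤ √(sumSqDiff (v · t)) := abs_sub_le_sqrt_sumSqDiff (v · t) i j
      _ ≤ √(sumSqDiff (v · 0) * exp (-(2 * δ) * t)) := sqrt_le_sqrt (hV_le t ht)
      _ = √(sumSqDiff (v · 0)) * exp (-δ * t) := by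
          rw [sqrt_mul' _ (exp_pos _).le, ← exp_half]; ring_nf

/-- Unconditional flocking (Ha–Liu) for the 1-D Cucker–Smale system with communication
rate `ψ(r) = (1+r²)^{-β}`, `0 < β ≤ 1/2`: positions stay uniformly bounded relative to
each other and velocity differences decay exponentially. -/
theorem stmt7 (N : ℕ) (hN : 0 < N) (β : ℝ) (hβ0 : 0 < β) (hβ : β ≤ 1 / 2)
    (x v : Fin N → ℝ → ℝ)
    (hx : ∀ i t, HasDerivAt (x i) (v i t) t)
    (hv : ∀ i t, HasDerivAt (v i)
      ((N : ℝ)⁻¹ * ∑ j, ((1 + |x i t - x j t| ^ 2) ^ (-β)) * (v j t - v i t)) t) :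
    (∃ B : ℝ, ∀ t ≥ (0 : ℝ), ∀ i j, |x i t - x j t| ≤ B) ∧
    ∃ C δ : ℝ, 0 < δ ∧ ∀ t ≥ (0 : ℝ), ∀ i j, |v i t - v j t| ≤ C * Real.exp (-δ * t) :=
  stmt7_general N β hβ0 hβ x v hx hv
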